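/- Let A ⊆ 𝔽_q be nonempty. Then |A(A + A)| ≫ min{ q, |A|² / q^{1/2} } with an absolute implied constant. In particular, if |A| ≥ q^{3/4}, then |A(A + A)| ≫ q. -/

import Mathlib

/-!
Put `S = A(A + A)` and `P = A × S ⊆ F²`. Each of the `|A \ {0}| |A|` lines `y = a (x + c)` with
`a ∈ A \ {0}`, `c ∈ A` contains the `|A|` points `(b, a (b + c))`, `b ∈ A`, of `P`. Vinh's
incidence bound `I(P, L) ≤ |P| |L| / q + √(q |P| |L|)` (Cauchy–Schwarz against the second
moment of the number of points of `P` on the `q²` non-vertical lines, two distinct points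
spanning at most one line) then gives `|S| ≫ min(q, |A|³ / q)`. This dominates
`min(q, |A|² / √q)` once `|A| > √q`; below that the trivial bound `|S| ≥ |A|` suffices.
-/

open Finset

namespace AffinePlane

variable {F : Type*} [Field F] [Fintype F] [DecidableEq F]

def line (l : F × F) : Finset (F × F) := {p | p.2 = l.1 * p.1 + l.2}

@[simp]
lemma mem_line {l p : F × F} : p ∈ line l ↔ p.2 = l.1 * p.1 + l.2 := by
  simp [line]

lemma card_lines_through (p : F × F) : #{l | p ∈ line l} = Fintype.card F := by
  have : ({l | p ∈ line l} : Finset (F × F)) = univ.image fun m => (m, p.2 - m * p.1) := by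
    ext ⟨m, b⟩
    simp only [mem_filter, mem_univ, true_and, mem_line, mem_image, Prod.mk.injEq]
    constructor
    · intro h; exact ⟨m, rfl, by rw [h]; ring⟩
    · rintro ⟨m, rfl, rfl⟩; ring
  rw [this, card_image_of_injective _ fun m m' h => congrArg Prod.fst h, card_univ]

lemma card_lines_through_pair_le_one {p p' : F × F} (h : p ≠ p') :
    #{l | p ∈ line l ∧ p' ∈ line l} ≤ 1 := by
  refine card_le_one.2 fun l hl l' hl' => ?_
  simp only [mem_filter, mem_univ, true_and, mem_line] at hl hl'
  have hx : p.1 - p'.1 ≠ 0 := by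
    refine sub_ne_zero.2 fun hx => h (Prod.ext hx ?_)
    rw [hl.1, hl.2, hx]
  have hm : l.1 = l'.1 :=
    mul_right_cancel₀ hx (by linear_combination hl'.1 - hl'.2 - hl.1 + hl.2)
  exact Prod.ext hm (by linear_combination hl'.1 - hl.1 - hm * p.1)

lemma sum_card_inter_line (P : Finset (F × F)) :
    ∑ l, #(P ∩ line l) = Fintype.card F * #P := by
  have hcount := sum_card_bipartiteAbove_eq_sum_card_bipartiteBelow (s := univ) (t := P)
    (r := fun l p => p ∈ line l)
  simp only [bipartiteAbove, bipartiteBelow, filter_mem_eq_inter, card_lines_through] at hcount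
  rw [hcount, sum_const, smul_eq_mul, mul_comm]

lemma sum_card_inter_line_sq_le (P : Finset (F × F)) :
    ∑ l, #(P ∩ line l) ^ 2 ≤ Fintype.card F * #P + #P ^ 2 := by
  have hsq (l : F × F) :
      #(P ∩ line l) ^ 2 = #{pp ∈ P ×ˢ P | pp.1 ∈ line l ∧ pp.2 ∈ line l} := by
    rw [sq, ← card_product, filter_product, filter_mem_eq_inter]
  have hcount := sum_card_bipartiteAbove_eq_sum_card_bipartiteBelow (s := univ) (t := P ×ˢ P)
    (r := fun l pp => pp.1 ∈ line l ∧ pp.2 ∈ line l)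
  simp only [bipartiteAbove, bipartiteBelow] at hcount
  simp only [hsq]
  rw [hcount, ← diag_union_offDiag, sum_union (disjoint_diag_offDiag _)]
  have hdiag : ∀ pp ∈ P.diag, #{l | pp.1 ∈ line l ∧ pp.2 ∈ line l} = Fintype.card F := by
    intro pp hpp
    simp only [(mem_diag.1 hpp).2, and_self, card_lines_through]
  have hoff : ∀ pp ∈ P.offDiag, #{l | pp.1 ∈ line l ∧ pp.2 ∈ line l} ≤ 1 :=
    fun pp hpp => card_lines_through_pair_le_one (mem_offDiag.1 hpp).2.2
  calc _ ≤ ∑ _pp ∈ P.diag, Fintype.card F + ∑ _pp ∈ P.offDiag, 1 :=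
        add_le_add (sum_congr rfl hdiag).le (sum_le_sum hoff)
    _ ≤ Fintype.card F * #P + #P ^ 2 := by
        rw [sum_const, sum_const, diag_card, offDiag_card, smul_eq_mul, smul_eq_mul, mul_one,
          mul_comm, sq]
        gcongr
        exact Nat.sub_le _ _

lemma sum_sq_card_inter_line_sub_le (P : Finset (F × F)) :
    ∑ l, ((#(P ∩ line l) : ℝ) - #P / Fintype.card F) ^ 2 ≤ Fintype.card F * #P := by
  have hq : (Fintype.card F : ℝ) ≠ 0 := by positivity
  have hsum : ∑ l, (#(P ∩ line l) : ℝ) = Fintype.card F * #P := by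
    exact_mod_cast sum_card_inter_line P
  have hsq : ∑ l, (#(P ∩ line l) : ℝ) ^ 2 ≤ Fintype.card F * #P + #P ^ 2 := by
    exact_mod_cast sum_card_inter_line_sq_le P
  simp only [sub_sq, sum_add_distrib, sum_sub_distrib, ← sum_mul, ← mul_sum, hsum, sum_const,
    card_univ, Fintype.card_prod, nsmul_eq_mul]
  field_simp
  push_cast
  nlinarith

theorem sum_card_inter_line_le (P L : Finset (F × F)) :
    ∑ l ∈ L, (#(P ∩ line l) : ℝ) ≤
      #P * #L / Fintype.card F + √(Fintype.card F * #P * #L) := by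
  set c : ℝ := #P / Fintype.card F with hc
  have hdev : (∑ l ∈ L, ((#(P ∩ line l) : ℝ) - c)) ^ 2 ≤ Fintype.card F * #P * #L :=
    calc _ ≤ #L * ∑ l ∈ L, ((#(P ∩ line l) : ℝ) - c) ^ 2 := sq_sum_le_card_mul_sum_sq
      _ ≤ #L * ∑ l, ((#(P ∩ line l) : ℝ) - c) ^ 2 := by gcongr; exact subset_univ L
      _ ≤ #L * (Fintype.card F * #P) := by gcongr; exact sum_sq_card_inter_line_sub_le P
      _ = _ := by ring
  have hsum := (le_abs_self _).trans (Real.abs_le_sqrt hdev)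
  rw [sum_sub_distrib, sum_const, nsmul_eq_mul] at hsum
  have hmean : #L * c = #P * #L / Fintype.card F := by rw [hc]; ring
  linarith

end AffinePlane

section MulAdd

open AffinePlane
open scoped Pointwise

variable {F : Type*} [Field F] [DecidableEq F]

lemma card_le_card_mul_add {A : Finset F} (hA : A.Nonempty) : #A ≤ #(A * (A + A)) := by
  by_cases h : ∃ a ∈ A, a ≠ 0
  · obtain ⟨a, ha, ha0⟩ := h
    exact card_le_card_of_injOn (fun b => a * (b + a))
      (fun b hb => mul_mem_mul ha (add_mem_add hb ha))
      (fun b _ b' _ e => add_right_cancel (mul_left_cancel₀ ha0 e))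
  · push Not at h
    calc #A ≤ 1 := card_le_one.2 fun a ha b hb => (h a ha).trans (h b hb).symm
      _ ≤ _ := (hA.mul (hA.add hA)).card_pos

lemma card_le_card_inter_line [Fintype F] {A : Finset F} {a c : F} (ha : a ∈ A) (hc : c ∈ A) :
    #A ≤ #((A ×ˢ (A * (A + A))) ∩ line (a, a * c)) :=
  card_le_card_of_injOn (fun b => (b, a * (b + c)))
    (fun b hb => mem_inter.2
      ⟨mem_product.2 ⟨hb, mul_mem_mul ha (add_mem_add hb hc)⟩, mem_line.2 (mul_add a b c)⟩)
    (fun _ _ _ _ e => congrArg Prod.fst e)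

lemma min_le_four_mul_of_le_add_sqrt {q s x : ℝ} (hq : 0 < q) (hs : 0 ≤ s) (hx : 0 ≤ x)
    (h : x ≤ x * s / q + √(q * s * x)) : min q (x / q) ≤ 4 * s := by
  rcases le_or_gt q (2 * s) with hqs | hqs
  · exact (min_le_left _ _).trans (by linarith)
  refine (min_le_right _ _).trans ((div_le_iff₀ hq).2 ?_)
  have hmean : x * s / q ≤ x / 2 := by rw [div_le_iff₀ hq]; nlinarith
  have hsq : (x / 2) ^ 2 ≤ q * s * x :=
    (Real.le_sqrt (by positivity) (by positivity)).1 (by linarith)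
  rcases hx.eq_or_lt with rfl | hx
  · positivity
  · nlinarith

theorem min_le_four_mul_card_mul_add [Fintype F] (A : Finset F) :
    min (Fintype.card F : ℝ) (#(A.erase 0) * #A ^ 2 / Fintype.card F) ≤
      4 * #(A * (A + A)) := by
  set L := (A.erase 0 ×ˢ A).image fun ac : F × F => (ac.1, ac.1 * ac.2)
  have hinj :
      Set.InjOn (fun ac : F × F => (ac.1, ac.1 * ac.2)) (A.erase 0 ×ˢ A : Finset (F × F)) := by
    rintro ⟨a, c⟩ h ⟨a', c'⟩ - e
    obtain ⟨rfl, e⟩ := Prod.mk.inj e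
    simp only [mem_coe, mem_product, mem_erase] at h
    exact Prod.ext rfl (mul_left_cancel₀ h.1.1 e)
  have hL : #L = #(A.erase 0) * #A := by rw [card_image_of_injOn hinj, card_product]
  have hinc : #A * #L ≤ ∑ l ∈ L, #((A ×ˢ (A * (A + A))) ∩ line l) := by
    rw [sum_image hinj, hL, mul_comm, ← card_product, ← smul_eq_mul, ← sum_const]
    exact sum_le_sum fun ac hac =>
      card_le_card_inter_line (mem_of_mem_erase (mem_product.1 hac).1) (mem_product.1 hac).2
  have hvinh := sum_card_inter_line_le (A ×ˢ (A * (A + A))) L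
  have hq : (0 : ℝ) < Fintype.card F := by positivity
  convert min_le_four_mul_of_le_add_sqrt hq (Nat.cast_nonneg _) (Nat.cast_nonneg (#A * #L)) ?_
    using 2
  · push_cast [hL]; ring
  calc ((#A * #L : ℕ) : ℝ) ≤ ∑ l ∈ L, (#((A ×ˢ (A * (A + A))) ∩ line l) : ℝ) := by
        exact_mod_cast hinc
    _ ≤ _ := hvinh
    _ = _ := by rw [card_product]; push_cast; ring_nf

lemma min_card_sq_div_sqrt_le [Fintype F] {A : Finset F} (hA : A.Nonempty) :
    min (Fintype.card F : ℝ) (#A ^ 2 / √(Fintype.card F)) ≤ 8 * #(A * (A + A)) := by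
  have hq : (1 : ℝ) < Fintype.card F := by exact_mod_cast Fintype.one_lt_card
  have hs : (#A : ℝ) ≤ #(A * (A + A)) := by exact_mod_cast card_le_card_mul_add hA
  have hn₀ (h : 1 < #A) : (#A : ℝ) ≤ 2 * #(A.erase 0) := by
    have := pred_card_le_card_erase (s := A) (a := 0)
    exact_mod_cast (by omega : #A ≤ 2 * #(A.erase 0))
  set q : ℝ := (Fintype.card F : ℝ)
  set n : ℝ := (#A : ℝ)
  have hsq : 1 < √q := by rw [Real.lt_sqrt zero_le_one, one_pow]; exact hq
  rcases le_or_gt n √q with hn | hn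
  · calc min q (n ^ 2 / √q) ≤ n ^ 2 / √q := min_le_right _ _
      _ ≤ n := by rw [div_le_iff₀ (by positivity), sq]; gcongr
      _ ≤ 8 * #(A * (A + A)) := by linarith
  replace hn₀ := hn₀ (Nat.one_lt_cast.1 (hsq.trans hn))
  have hsq_div : n ^ 2 / √q ≤ 2 * (#(A.erase 0) * n ^ 2 / q) := by
    rw [← mul_div_assoc, div_le_div_iff₀ (by positivity) (by positivity)]
    calc n ^ 2 * q = n ^ 2 * (√q * √q) := by rw [Real.mul_self_sqrt (by positivity)]
      _ ≤ n ^ 2 * (n * √q) := by gcongr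
      _ ≤ n ^ 2 * (2 * #(A.erase 0) * √q) := by gcongr
      _ = _ := by ring
  calc min q (n ^ 2 / √q) ≤ min (2 * q) (2 * (#(A.erase 0) * n ^ 2 / q)) :=
        min_le_min (by linarith) hsq_div
    _ = 2 * min q (#(A.erase 0) * n ^ 2 / q) := (mul_min_of_nonneg _ _ zero_le_two).symm
    _ ≤ 8 * #(A * (A + A)) := by linarith [min_le_four_mul_card_mul_add A]

lemma image_mul_add_eq (A : Finset F) :
    (A ×ˢ A ×ˢ A).image (fun t : F × F × F => t.1 * (t.2.1 + t.2.2)) = A * (A + A) := by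
  ext x
  simp [mem_mul, mem_add, and_assoc]

end MulAdd

lemma le_sq_div_sqrt_of_rpow_le {q n : ℝ} (hq : 0 < q) (h : q ^ (3 / 4 : ℝ) ≤ n) :
    q ≤ n ^ 2 / √q := by
  rw [le_div_iff₀ (Real.sqrt_pos.2 hq)]
  calc q * √q = (q ^ (3 / 4 : ℝ)) ^ 2 := by
        rw [← Real.rpow_mul_natCast hq.le, Real.sqrt_eq_rpow,
          ← Real.rpow_one_add' hq.le (by norm_num)]
        norm_num
    _ ≤ n ^ 2 := by gcongr

theorem A_mul_A_plus_A_bound :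
    ∃ c : ℝ, 0 < c ∧
      ∀ (F : Type) (_ : Field F) (_ : Fintype F) (_ : DecidableEq F)
        (A : Finset F), A.Nonempty →
        (c * min (Fintype.card F : ℝ)
            ((A.card : ℝ) ^ 2 / Real.sqrt (Fintype.card F : ℝ)) ≤
          (((A ×ˢ A ×ˢ A).image (fun t : F × F × F => t.1 * (t.2.1 + t.2.2))).card : ℝ)) ∧
        ((Fintype.card F : ℝ) ^ ((3 : ℝ) / 4) ≤ (A.card : ℝ) →
          c * (Fintype.card F : ℝ) ≤
            (((A ×ˢ A ×ˢ A).image (fun t : F × F × F => t.1 * (t.2.1 + t.2.2))).card : ℝ)) := by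
  refine ⟨1 / 8, by norm_num, fun F _ _ _ A hA => ?_⟩
  rw [image_mul_add_eq]
  have hbound := min_card_sq_div_sqrt_le hA
  refine ⟨by linarith, fun hA34 => ?_⟩
  rw [min_eq_left (le_sq_div_sqrt_of_rpow_le (by positivity) hA34)] at hbound
  linarith
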